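/- arXiv:2204.08517 — 2 statements merged into one kernel-verified Lean document; each statement's English description precedes it below -/
import Mathlib

section
/- Let G ⊆ ℂ³ be a balanced open set with 𝒱 ⊆ G, where 𝒱 = {z ∈ 𝔻³ : z₃² = z₁z₂}. If (G,𝒱) is a norm preserving pair, then G ⊆ 𝒢 = {z ∈ 𝔻³ : |z₁z₂ − z₃²| < (1 − |z₃|²) + √(1 − |z₁|²)·√(1 − |z₂|²)}. -/
/-!
Fix `λ ∈ G` and a complex linear functional `ℓ`. Extending `ℓ|𝒱` to `F` on `G` with the same
supremum, the fact that `𝒱` is balanced and spans `ℂ³` forces `DF(0) = ℓ`, so Schwarz's lemma for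
`ζ ↦ F(ζλ)` on the disc gives `|ℓ(λ)| ≤ sup_𝒱 |ℓ|`. Since `𝒱` is balanced, Hahn–Banach turns these
inequalities into `λ ∈ closure (conv 𝒱)`.

Every point of `𝒱` is `(u², v², uv)` with `|u|, |v| ≤ 1`. For a convex combination `(X, Y, Z)` of
such points, the weighted Lagrange identity `2(XY - Z²) = ∑ wᵢwⱼ(uᵢvⱼ - uⱼvᵢ)²`, a pairwise bound
on `|uᵢvⱼ - uⱼvᵢ|²` and Cauchy–Schwarz give `|XY - Z²| ≤ (1 - |Z|²) + √(1 - |X|²)√(1 - |Y|²)`: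
the closed convex hull of `𝒱` satisfies the non-strict inequalities defining `𝒢`. As `G` is open,
`rλ ∈ G` for some `r > 1`, and scaling back by `r` makes them strict.
-/

open Metric

noncomputable section

/-- The open unit disc in `ℂ`. -/
def uD : Set ℂ := Metric.ball (0 : ℂ) 1

/-- The open unit tridisc `𝔻³` in `ℂ³`. -/
def triD : Set (ℂ × ℂ × ℂ) := {z | z.1 ∈ uD ∧ z.2.1 ∈ uD ∧ z.2.2 ∈ uD}

/-- The variety `𝒱 = {z ∈ 𝔻³ : z₃² = z₁ z₂}`. -/
def calV : Set (ℂ × ℂ × ℂ) := {z | z ∈ triD ∧ z.2.2 ^ 2 = z.1 * z.2.1}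

/-- The domain `𝒢 = {z ∈ 𝔻³ : |z₁z₂ - z₃²| < (1-|z₃|²) + √(1-|z₁|²)√(1-|z₂|²)}`. -/
def calG : Set (ℂ × ℂ × ℂ) :=
  {z | z ∈ triD ∧
    ‖z.1 * z.2.1 - z.2.2 ^ 2‖ <
      (1 - ‖z.2.2‖ ^ 2) + Real.sqrt (1 - ‖z.1‖ ^ 2) * Real.sqrt (1 - ‖z.2.1‖ ^ 2)}

/-- A function is holomorphic on `𝒱` if near every point of `𝒱` it extends to a
holomorphic function on an open neighbourhood. -/
def HoloOnV (f : ℂ × ℂ × ℂ → ℂ) : Prop :=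
  ∀ p ∈ calV, ∃ U : Set (ℂ × ℂ × ℂ), IsOpen U ∧ p ∈ U ∧
    ∃ F : ℂ × ℂ × ℂ → ℂ, DifferentiableOn ℂ F U ∧ ∀ q ∈ U ∩ calV, F q = f q

open Finset ComplexConjugate

section BalancedDomain

variable {E F : Type*} [NormedAddCommGroup E] [NormedSpace ℂ E]
  [NormedAddCommGroup F] [NormedSpace ℂ F]

theorem DifferentiableAt.hasDerivAt_comp_smul_zero {f : E → F} (hf : DifferentiableAt ℂ f 0)
    (x : E) : HasDerivAt (fun ζ : ℂ => f (ζ • x)) (fderiv ℂ f 0 x) 0 := by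
  have hline : HasDerivAt (fun ζ : ℂ => ζ • x) x 0 := by
    simpa using (hasDerivAt_id (0 : ℂ)).smul_const x
  exact hf.hasFDerivAt.comp_hasDerivAt_of_eq 0 hline (zero_smul ℂ x).symm

theorem fderiv_eq_of_eqOn_of_balanced {V : Set E} {f : E → F} {ℓ : E →L[ℂ] F}
    (hV : Balanced ℂ V) (hspan : Submodule.span ℂ V = ⊤) (hf : DifferentiableAt ℂ f 0)
    (hfV : Set.EqOn f ℓ V) : fderiv ℂ f 0 = ℓ := by
  refine ContinuousLinearMap.coe_injective (LinearMap.ext_on hspan fun z hz => ?_)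
  have hnear : (fun ζ : ℂ => f (ζ • z)) =ᶠ[nhds 0] fun ζ => ζ • ℓ z := by
    filter_upwards [ball_mem_nhds (0 : ℂ) one_pos] with ζ hζ
    rw [hfV (hV.smul_mem (mem_ball_zero_iff.mp hζ).le hz), map_smul]
  have hℓ : HasDerivAt (fun ζ : ℂ => ζ • ℓ z) (ℓ z) 0 := by
    simpa using (hasDerivAt_id (0 : ℂ)).smul_const (ℓ z)
  exact (hf.hasDerivAt_comp_smul_zero z).unique (hℓ.congr_of_eventuallyEq hnear)

theorem norm_fderiv_apply_le_of_balanced {G : Set E} {f : E → F} {S : ℝ} {x : E}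
    (hG : IsOpen G) (hbal : Balanced ℂ G) (hf : DifferentiableOn ℂ f G) (hf0 : f 0 = 0)
    (hfS : ∀ z ∈ G, ‖f z‖ ≤ S) (hx : x ∈ G) : ‖fderiv ℂ f 0 x‖ ≤ S := by
  have hmem : ∀ ζ ∈ ball (0 : ℂ) 1, ζ • x ∈ G := fun ζ hζ =>
    hbal.smul_mem (mem_ball_zero_iff.mp hζ).le hx
  have hd : DifferentiableOn ℂ (fun ζ : ℂ => f (ζ • x)) (ball 0 1) := fun ζ hζ =>
    ((hf.differentiableAt (hG.mem_nhds (hmem ζ hζ))).comp ζ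
      (differentiableAt_id.smul_const x)).differentiableWithinAt
  have hmaps : Set.MapsTo (fun ζ : ℂ => f (ζ • x)) (ball 0 1) (closedBall (f ((0 : ℂ) • x)) S) :=
    fun ζ hζ => by simpa [hf0] using hfS _ (hmem ζ hζ)
  have hf0' : DifferentiableAt ℂ f 0 :=
    hf.differentiableAt (hG.mem_nhds (by simpa using hmem 0 (mem_ball_self one_pos)))
  simpa [(hf0'.hasDerivAt_comp_smul_zero x).deriv] using
    Complex.norm_deriv_le_div_of_mapsTo_ball hd hmaps one_pos

end BalancedDomain

section Separation

variable {E : Type*} [NormedAddCommGroup E] [NormedSpace ℂ E]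

theorem mem_closure_convexHull_of_forall_norm_le {V : Set E} {x : E} (hV : Balanced ℂ V)
    (hne : V.Nonempty)
    (hx : ∀ ℓ : StrongDual ℂ E, ‖ℓ x‖ ≤ sSup ((fun z => ‖ℓ z‖) '' V)) :
    x ∈ closure (convexHull ℝ V) := by
  by_contra hnot
  obtain ⟨ℓ, u, hℓK, hℓx⟩ := RCLike.geometric_hahn_banach_closed_point (𝕜 := ℂ)
    (convex_convexHull ℝ V).closure isClosed_closure hnot
  have hV_le : ∀ z ∈ V, ‖ℓ z‖ ≤ u := by
    intro z hz
    obtain ⟨c, hc, hcz⟩ := Complex.exists_norm_eq_mul_self (ℓ z)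
    have hcV : c • z ∈ closure (convexHull ℝ V) :=
      subset_closure (subset_convexHull ℝ V (hV.smul_mem hc.le hz))
    have := hℓK _ hcV
    rw [map_smul, smul_eq_mul, ← hcz] at this
    simpa using this.le
  have hsup : sSup ((fun z => ‖ℓ z‖) '' V) ≤ u :=
    csSup_le (hne.image _) (by simpa using hV_le)
  linarith [hx ℓ, RCLike.re_le_norm (ℓ x)]

end Separation

theorem exists_one_lt_smul_mem {E : Type*} [NormedAddCommGroup E] [NormedSpace ℂ E] {G : Set E}
    {x : E} (hG : IsOpen G) (hx : x ∈ G) : ∃ r : ℝ, 1 < r ∧ (r : ℂ) • x ∈ G := by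
  have hcont : Continuous fun r : ℝ => (r : ℂ) • x := by fun_prop
  have hnear : ∀ᶠ r : ℝ in nhdsWithin 1 (Set.Ioi 1), (r : ℂ) • x ∈ G := by
    refine nhdsWithin_le_nhds (hcont.continuousAt.preimage_mem_nhds ?_)
    rw [Complex.ofReal_one, one_smul]
    exact hG.mem_nhds hx
  obtain ⟨r, hrG, hr⟩ := (hnear.and self_mem_nhdsWithin).exists
  exact ⟨r, hr, hrG⟩

theorem mem_calV_iff {z : ℂ × ℂ × ℂ} :
    z ∈ calV ↔ (‖z.1‖ < 1 ∧ ‖z.2.1‖ < 1 ∧ ‖z.2.2‖ < 1) ∧ z.2.2 ^ 2 = z.1 * z.2.1 := by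
  simp [calV, triD, uD]

theorem balanced_calV : Balanced ℂ calV := by
  refine balanced_iff_smul_mem.2 fun a ha z hz => ?_
  obtain ⟨⟨h₁, h₂, h₃⟩, heq⟩ := mem_calV_iff.1 hz
  have hlt : ∀ w : ℂ, ‖w‖ < 1 → ‖a * w‖ < 1 := fun w hw => by
    rw [norm_mul]; nlinarith [norm_nonneg a, norm_nonneg w]
  refine mem_calV_iff.2 ⟨⟨hlt _ h₁, hlt _ h₂, hlt _ h₃⟩, ?_⟩
  simp only [Prod.smul_fst, Prod.smul_snd, smul_eq_mul]
  linear_combination a ^ 2 * heq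

theorem zero_mem_calV : (0 : ℂ × ℂ × ℂ) ∈ calV := by
  simp [mem_calV_iff]

theorem span_calV : Submodule.span ℂ calV = ⊤ := by
  have p₁ : ((1 / 2, 0, 0) : ℂ × ℂ × ℂ) ∈ calV := by norm_num [mem_calV_iff]
  have p₂ : ((0, 1 / 2, 0) : ℂ × ℂ × ℂ) ∈ calV := by norm_num [mem_calV_iff]
  have p₃ : ((1 / 4, 1 / 4, 1 / 4) : ℂ × ℂ × ℂ) ∈ calV := by norm_num [mem_calV_iff]
  have p₄ : ((1 / 4, 1 / 4, -1 / 4) : ℂ × ℂ × ℂ) ∈ calV := by norm_num [mem_calV_iff]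
  refine eq_top_iff.2 fun x _ => ?_
  have hx : x = (2 * x.1) • ((1 / 2, 0, 0) : ℂ × ℂ × ℂ)
      + (2 * x.2.1) • ((0, 1 / 2, 0) : ℂ × ℂ × ℂ)
      + (2 * x.2.2) • (((1 / 4, 1 / 4, 1 / 4) : ℂ × ℂ × ℂ) - (1 / 4, 1 / 4, -1 / 4)) := by
    ext <;> simp only [Prod.smul_mk, Prod.mk_add_mk, Prod.mk_sub_mk, smul_eq_mul] <;> ring
  rw [hx]
  open Submodule in
  exact add_mem (add_mem (smul_mem _ _ (subset_span p₁)) (smul_mem _ _ (subset_span p₂)))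
    (smul_mem _ _ (sub_mem (subset_span p₃) (subset_span p₄)))

theorem norm_lt_one_of_mem_calV {z : ℂ × ℂ × ℂ} (hz : z ∈ calV) : ‖z‖ < 1 := by
  obtain ⟨⟨h₁, h₂, h₃⟩, -⟩ := mem_calV_iff.1 hz
  simp [Prod.norm_def, h₁, h₂, h₃]

theorem exists_sq_sq_mul_of_mem_calV {z : ℂ × ℂ × ℂ} (hz : z ∈ calV) :
    ∃ u v : ℂ, ‖u‖ ≤ 1 ∧ ‖v‖ ≤ 1 ∧ z = (u ^ 2, v ^ 2, u * v) := by
  obtain ⟨⟨h₁, h₂, -⟩, heq⟩ := mem_calV_iff.1 hz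
  have norm_le_one : ∀ {u w : ℂ}, u ^ 2 = w → ‖w‖ < 1 → ‖u‖ ≤ 1 := fun {u w} hu hw => by
    rw [← hu, norm_pow] at hw; nlinarith [norm_nonneg u]
  obtain ⟨u, hu⟩ := IsAlgClosed.exists_pow_nat_eq z.1 two_pos
  by_cases hu0 : u = 0
  · obtain ⟨v, hv⟩ := IsAlgClosed.exists_pow_nat_eq z.2.1 two_pos
    have hz₃ : z.2.2 = 0 := by simpa [← hu, hu0] using heq
    refine ⟨u, v, norm_le_one hu h₁, norm_le_one hv h₂, ?_⟩
    ext <;> simp [← hu, hv, hz₃, hu0]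
  · have hv : (z.2.2 / u) ^ 2 = z.2.1 := by rw [div_pow, heq, ← hu]; field_simp
    refine ⟨u, z.2.2 / u, norm_le_one hu h₁, norm_le_one hv h₂, ?_⟩
    ext <;> simp [hu, hv, mul_div_cancel₀ _ hu0]

theorem one_sub_re_mul_conj_nonneg {x y : ℂ} (hx : ‖x‖ ≤ 1) (hy : ‖y‖ ≤ 1) :
    0 ≤ 1 - (x * conj y).re := by
  have : ‖x * conj y‖ ≤ 1 := by
    rw [norm_mul, Complex.norm_conj]; exact mul_le_one₀ hx (norm_nonneg _) hy
  linarith [Complex.re_le_norm (x * conj y)]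

theorem two_mul_im_sq_le_one_sub_re_sq {a : ℂ} (ha : ‖a‖ ≤ 1) : 2 * a.im ^ 2 ≤ 1 - (a ^ 2).re := by
  have h : ‖a‖ ^ 2 = a.re * a.re + a.im * a.im := by
    rw [← Complex.normSq_eq_norm_sq, Complex.normSq_apply]
  rw [pow_two a, Complex.mul_re]; nlinarith [norm_nonneg a]

theorem neg_two_mul_im_mul_im_le {a b : ℂ} (ha : ‖a‖ ≤ 1) (hb : ‖b‖ ≤ 1) :
    -(2 * (a.im * b.im)) ≤ √(1 - (a ^ 2).re) * √(1 - (b ^ 2).re) := by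
  have hA := two_mul_im_sq_le_one_sub_re_sq ha
  have hB := two_mul_im_sq_le_one_sub_re_sq hb
  rw [← Real.sqrt_mul (by nlinarith)]
  exact Real.le_sqrt_of_sq_le (by nlinarith [mul_le_mul hA hB (by positivity) (by nlinarith)])

theorem norm_mul_sub_mul_sq_le {u₁ v₁ u₂ v₂ : ℂ} (hu₁ : ‖u₁‖ ≤ 1) (hv₁ : ‖v₁‖ ≤ 1)
    (hu₂ : ‖u₂‖ ≤ 1) (hv₂ : ‖v₂‖ ≤ 1) :
    ‖u₁ * v₂ - u₂ * v₁‖ ^ 2 ≤ 2 * ((1 - (u₁ * v₁ * conj (u₂ * v₂)).re)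
      + √(1 - (u₁ ^ 2 * conj (u₂ ^ 2)).re) * √(1 - (v₁ ^ 2 * conj (v₂ ^ 2)).re)) := by
  set a := u₁ * conj u₂
  set b := v₁ * conj v₂
  have norm_le_one : ∀ x y : ℂ, ‖x‖ ≤ 1 → ‖y‖ ≤ 1 → ‖x * y‖ ≤ 1 := fun x y hx hy => by
    rw [norm_mul]; exact mul_le_one₀ hx (norm_nonneg _) hy
  have ha : ‖a‖ ≤ 1 := norm_le_one _ _ hu₁ (by rwa [Complex.norm_conj])
  have hb : ‖b‖ ≤ 1 := norm_le_one _ _ hv₁ (by rwa [Complex.norm_conj])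
  have hexpand : ‖u₁ * v₂ - u₂ * v₁‖ ^ 2
      = ‖u₁ * v₂‖ ^ 2 + ‖u₂ * v₁‖ ^ 2 - 2 * (a.re * b.re + a.im * b.im) := by
    rw [← Complex.normSq_eq_norm_sq, Complex.normSq_sub, Complex.normSq_eq_norm_sq,
      Complex.normSq_eq_norm_sq]
    congr 2
    rw [show u₁ * v₂ * conj (u₂ * v₁) = a * conj b by
      simp only [a, b, map_mul, Complex.conj_conj]; ring]
    simp [Complex.mul_re]
  have hab : u₁ * v₁ * conj (u₂ * v₂) = a * b := by simp only [a, b, map_mul]; ring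
  have ha2 : u₁ ^ 2 * conj (u₂ ^ 2) = a ^ 2 := by simp only [a, map_pow]; ring
  have hb2 : v₁ ^ 2 * conj (v₂ ^ 2) = b ^ 2 := by simp only [b, map_pow]; ring
  have h₁ : ‖u₁ * v₂‖ ^ 2 ≤ 1 := pow_le_one₀ (norm_nonneg _) (norm_le_one _ _ hu₁ hv₂)
  have h₂ : ‖u₂ * v₁‖ ^ 2 ≤ 1 := pow_le_one₀ (norm_nonneg _) (norm_le_one _ _ hu₂ hv₁)
  rw [hexpand, hab, ha2, hb2, Complex.mul_re a b]
  -- `Re (a * conj b) = Re (a * b) + 2 Im a Im b`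
  linarith [neg_two_mul_im_mul_im_le ha hb]

section WeightedAverages

variable {ι : Type*} [Fintype ι]

theorem two_mul_sum_mul_sum_sub_sq {R : Type*} [CommRing R] (w u v : ι → R) :
    2 * ((∑ i, w i * u i ^ 2) * (∑ i, w i * v i ^ 2) - (∑ i, w i * (u i * v i)) ^ 2)
      = ∑ i, ∑ j, w i * w j * (u i * v j - u j * v i) ^ 2 := by
  rw [show ∀ X Y Z : R, 2 * (X * Y - Z ^ 2) = X * Y + Y * X - 2 * (Z * Z) by intros; ring,
    sum_mul_sum, sum_mul_sum, sum_mul_sum, mul_sum, ← sum_add_distrib, ← sum_sub_distrib]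
  refine sum_congr rfl fun i _ => ?_
  rw [mul_sum, ← sum_add_distrib, ← sum_sub_distrib]
  exact sum_congr rfl fun j _ => by ring

theorem one_sub_norm_sq_sum_eq {w : ι → ℝ} (hw : ∑ i, w i = 1) (f : ι → ℂ) :
    1 - ‖∑ i, (w i : ℂ) * f i‖ ^ 2 = ∑ i, ∑ j, w i * w j * (1 - (f i * conj (f j)).re) := by
  have hnorm : ‖∑ i, (w i : ℂ) * f i‖ ^ 2 = ∑ i, ∑ j, w i * w j * (f i * conj (f j)).re := by
    rw [← Complex.ofReal_re (‖_‖ ^ 2), Complex.ofReal_pow, ← Complex.mul_conj', map_sum,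
      sum_mul_sum, Complex.re_sum]
    refine sum_congr rfl fun i _ => ?_
    rw [Complex.re_sum]
    refine sum_congr rfl fun j _ => ?_
    rw [map_mul, Complex.conj_ofReal, ← Complex.re_ofReal_mul]
    congr 1; push_cast; ring
  have hone : ∑ i, ∑ j, w i * w j = 1 := by rw [← sum_mul_sum, hw, one_mul]
  simp only [mul_sub, mul_one, sum_sub_distrib, hone, hnorm]

theorem sum_sum_mul_sqrt_mul_sqrt_le {w : ι → ℝ} {a b : ι → ι → ℝ} (hw : ∀ i, 0 ≤ w i)
    (ha : ∀ i j, 0 ≤ a i j) (hb : ∀ i j, 0 ≤ b i j) :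
    ∑ i, ∑ j, w i * w j * (√(a i j) * √(b i j))
      ≤ √(∑ i, ∑ j, w i * w j * a i j) * √(∑ i, ∑ j, w i * w j * b i j) := by
  have hww : ∀ i j, 0 ≤ w i * w j := fun i j => mul_nonneg (hw i) (hw j)
  have cs := Real.sum_mul_le_sqrt_mul_sqrt (univ ×ˢ univ)
    (fun p => √(w p.1 * w p.2) * √(a p.1 p.2)) (fun p => √(w p.1 * w p.2) * √(b p.1 p.2))
  simp only [sum_product, mul_pow, Real.sq_sqrt (hww _ _), Real.sq_sqrt (ha _ _),
    Real.sq_sqrt (hb _ _)] at cs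
  refine le_of_eq_of_le (sum_congr rfl fun i _ => sum_congr rfl fun j _ => ?_) cs
  rw [mul_mul_mul_comm (√(w i * w j)), Real.mul_self_sqrt (hww i j)]

theorem norm_sum_mul_sum_sub_sq_le {w : ι → ℝ} {u v : ι → ℂ} (hw : ∀ i, 0 ≤ w i)
    (hw₁ : ∑ i, w i = 1) (hu : ∀ i, ‖u i‖ ≤ 1) (hv : ∀ i, ‖v i‖ ≤ 1) :
    ‖(∑ i, (w i : ℂ) * u i ^ 2) * (∑ i, (w i : ℂ) * v i ^ 2) - (∑ i, (w i : ℂ) * (u i * v i)) ^ 2‖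
      ≤ (1 - ‖∑ i, (w i : ℂ) * (u i * v i)‖ ^ 2)
        + √(1 - ‖∑ i, (w i : ℂ) * u i ^ 2‖ ^ 2) * √(1 - ‖∑ i, (w i : ℂ) * v i ^ 2‖ ^ 2) := by
  have hww : ∀ i j, 0 ≤ w i * w j := fun i j => mul_nonneg (hw i) (hw j)
  have hsq : ∀ i, ‖u i ^ 2‖ ≤ 1 := fun i => by
    rw [norm_pow]; exact pow_le_one₀ (norm_nonneg _) (hu i)
  have hsq' : ∀ i, ‖v i ^ 2‖ ≤ 1 := fun i => by
    rw [norm_pow]; exact pow_le_one₀ (norm_nonneg _) (hv i)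
  have hCS := sum_sum_mul_sqrt_mul_sqrt_le hw
    (fun i j => one_sub_re_mul_conj_nonneg (hsq i) (hsq j))
    (fun i j => one_sub_re_mul_conj_nonneg (hsq' i) (hsq' j))
  rw [← one_sub_norm_sq_sum_eq hw₁, ← one_sub_norm_sq_sum_eq hw₁] at hCS
  have hsum : 2 * ‖(∑ i, (w i : ℂ) * u i ^ 2) * (∑ i, (w i : ℂ) * v i ^ 2)
      - (∑ i, (w i : ℂ) * (u i * v i)) ^ 2‖
      ≤ ∑ i, ∑ j, w i * w j * ‖u i * v j - u j * v i‖ ^ 2 := by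
    rw [← Complex.norm_two, ← norm_mul, two_mul_sum_mul_sum_sub_sq]
    refine (norm_sum_le _ _).trans (sum_le_sum fun i _ => (norm_sum_le _ _).trans
      (sum_le_sum fun j _ => le_of_eq ?_))
    rw [norm_mul, norm_pow, ← Complex.ofReal_mul, Complex.norm_real,
      Real.norm_of_nonneg (hww i j)]
  have hpair : ∑ i, ∑ j, w i * w j * ‖u i * v j - u j * v i‖ ^ 2
      ≤ 2 * ((1 - ‖∑ i, (w i : ℂ) * (u i * v i)‖ ^ 2)
        + ∑ i, ∑ j, w i * w j * (√(1 - (u i ^ 2 * conj (u j ^ 2)).re)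
          * √(1 - (v i ^ 2 * conj (v j ^ 2)).re))) := by
    rw [one_sub_norm_sq_sum_eq hw₁, mul_add, mul_sum, mul_sum, ← sum_add_distrib]
    refine sum_le_sum fun i _ => ?_
    rw [mul_sum, mul_sum, ← sum_add_distrib]
    refine sum_le_sum fun j _ => ?_
    have := mul_le_mul_of_nonneg_left
      (norm_mul_sub_mul_sq_le (hu i) (hv i) (hu j) (hv j)) (hww i j)
    linarith
  linarith

end WeightedAverages

def calGBound (z : ℂ × ℂ × ℂ) : ℝ :=
  (1 - ‖z.2.2‖ ^ 2) + √(1 - ‖z.1‖ ^ 2) * √(1 - ‖z.2.1‖ ^ 2)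

def calW : Set (ℂ × ℂ × ℂ) :=
  {z | ‖z.1‖ ≤ 1 ∧ ‖z.2.1‖ ≤ 1 ∧ ‖z.2.2‖ ≤ 1 ∧ ‖z.1 * z.2.1 - z.2.2 ^ 2‖ ≤ calGBound z}

theorem isClosed_calW : IsClosed calW := by
  have hbound : Continuous calGBound := by unfold calGBound; fun_prop
  have hnorm : ∀ f : ℂ × ℂ × ℂ → ℂ, Continuous f → IsClosed {z | ‖f z‖ ≤ 1} := fun f hf =>
    isClosed_le hf.norm continuous_const
  exact (hnorm _ (by fun_prop)).inter <| (hnorm _ (by fun_prop)).inter <|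
    (hnorm _ (by fun_prop)).inter <| isClosed_le (by fun_prop) hbound

theorem sum_smul_mem_calW {ι : Type*} [Fintype ι] {w : ι → ℝ} {u v : ι → ℂ} (hw : ∀ i, 0 ≤ w i)
    (hw₁ : ∑ i, w i = 1) (hu : ∀ i, ‖u i‖ ≤ 1) (hv : ∀ i, ‖v i‖ ≤ 1) :
    ∑ i, w i • ((u i ^ 2, v i ^ 2, u i * v i) : ℂ × ℂ × ℂ) ∈ calW := by
  have norm_avg_le : ∀ f : ι → ℂ, (∀ i, ‖f i‖ ≤ 1) → ‖∑ i, (w i : ℂ) * f i‖ ≤ 1 := fun f hf =>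
    (norm_sum_le _ _).trans <| by
      simpa [Complex.norm_real, Real.norm_of_nonneg (hw _), hw₁] using
        sum_le_sum fun i (_ : i ∈ Finset.univ) => mul_le_of_le_one_right (hw i) (hf i)
  simp only [calW, calGBound, Set.mem_ofPred_eq, Prod.fst_sum, Prod.snd_sum, Prod.smul_fst,
    Prod.smul_snd, Complex.real_smul]
  refine ⟨norm_avg_le _ fun i => ?_, norm_avg_le _ fun i => ?_, norm_avg_le _ fun i => ?_,
    norm_sum_mul_sum_sub_sq_le hw hw₁ hu hv⟩
  all_goals simp only [norm_pow, norm_mul]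
  · exact pow_le_one₀ (norm_nonneg _) (hu i)
  · exact pow_le_one₀ (norm_nonneg _) (hv i)
  · exact mul_le_one₀ (hu i) (norm_nonneg _) (hv i)

theorem convexHull_calV_subset_calW : convexHull ℝ calV ⊆ calW := by
  intro x hx
  obtain ⟨ι, _, w, z, hw, hw₁, hzV, rfl⟩ := mem_convexHull_iff_exists_fintype.1 hx
  choose u v hu hv hz using fun i => exists_sq_sq_mul_of_mem_calV (hzV i)
  simpa only [hz] using sum_smul_mem_calW hw hw₁ hu hv

theorem calGBound_smul_le {r : ℝ} (hr : 1 ≤ r) (z : ℂ × ℂ × ℂ) :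
    calGBound ((r : ℂ) • z) ≤ calGBound z := by
  have hle : ∀ w : ℂ, ‖w‖ ≤ ‖(r : ℂ) * w‖ := fun w => by
    rw [norm_mul, Complex.norm_real, Real.norm_of_nonneg (by linarith)]
    exact le_mul_of_one_le_left (norm_nonneg w) hr
  simp only [calGBound, Prod.smul_fst, Prod.smul_snd, smul_eq_mul]
  gcongr <;> exact hle _

theorem mem_calG_of_smul_mem_calW {r : ℝ} (hr : 1 < r) {z : ℂ × ℂ × ℂ}
    (h : (r : ℂ) • z ∈ calW) : z ∈ calG := by
  obtain ⟨h₁, h₂, h₃, hineq⟩ := h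
  simp only [Prod.smul_fst, Prod.smul_snd, smul_eq_mul, norm_mul, Complex.norm_real,
    Real.norm_of_nonneg (zero_le_one.trans hr.le)] at h₁ h₂ h₃
  have hlt : ∀ w : ℂ, r * ‖w‖ ≤ 1 → ‖w‖ < 1 := fun w hw => by nlinarith [norm_nonneg w]
  have hpos : 0 < calGBound z := by
    have := hlt _ h₃
    exact add_pos_of_pos_of_nonneg (by nlinarith [norm_nonneg z.2.2]) (by positivity)
  have hscale : r ^ 2 * ‖z.1 * z.2.1 - z.2.2 ^ 2‖ ≤ calGBound z := by
    refine le_trans (le_of_eq ?_) (hineq.trans (calGBound_smul_le hr.le z))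
    rw [← Real.norm_of_nonneg (sq_nonneg r), ← Complex.norm_real, ← norm_mul]
    simp only [Prod.smul_fst, Prod.smul_snd, smul_eq_mul]
    congr 1; push_cast; ring
  refine ⟨⟨mem_ball_zero_iff.2 (hlt _ h₁), mem_ball_zero_iff.2 (hlt _ h₂),
    mem_ball_zero_iff.2 (hlt _ h₃)⟩, ?_⟩
  calc ‖z.1 * z.2.1 - z.2.2 ^ 2‖ ≤ calGBound z / r ^ 2 := by
        rw [le_div_iff₀ (by positivity)]; linarith
    _ < calGBound z := div_lt_self hpos (one_lt_pow₀ hr two_ne_zero)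

def IsNormPreservingPair (G : Set (ℂ × ℂ × ℂ)) : Prop :=
  ∀ f : ℂ × ℂ × ℂ → ℂ, HoloOnV f → (∃ C : ℝ, ∀ z ∈ calV, ‖f z‖ ≤ C) →
    ∃ F : ℂ × ℂ × ℂ → ℂ, DifferentiableOn ℂ F G ∧ (∀ z ∈ calV, F z = f z) ∧
      sSup ((fun z => ‖F z‖) '' G) = sSup ((fun z => ‖f z‖) '' calV)

theorem norm_apply_le_sSup_calV {G : Set (ℂ × ℂ × ℂ)} (hG : IsOpen G) (hbal : Balanced ℂ G)
    (hVG : calV ⊆ G) (hnp : IsNormPreservingPair G) (ℓ : StrongDual ℂ (ℂ × ℂ × ℂ))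
    {x : ℂ × ℂ × ℂ} (hx : x ∈ G) : ‖ℓ x‖ ≤ sSup ((fun z => ‖ℓ z‖) '' calV) := by
  have hℓbound : ∀ z ∈ calV, ‖ℓ z‖ ≤ ‖ℓ‖ := fun z hz =>
    ℓ.le_of_opNorm_le le_rfl z |>.trans (mul_le_of_le_one_right (norm_nonneg ℓ)
      (norm_lt_one_of_mem_calV hz).le)
  obtain ⟨F, hFG, hFV, hFS⟩ := hnp ℓ
    (fun _ _ => ⟨Set.univ, isOpen_univ, trivial, ℓ, ℓ.differentiable.differentiableOn,
      fun _ _ => rfl⟩) ⟨‖ℓ‖, hℓbound⟩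
  set S := sSup ((fun z => ‖ℓ z‖) '' calV)
  have hℓS : ∀ z ∈ calV, ‖ℓ z‖ ≤ S := fun z hz =>
    le_csSup ⟨‖ℓ‖, Set.forall_mem_image.2 hℓbound⟩ ⟨z, hz, rfl⟩
  by_cases hbdd : BddAbove ((fun z => ‖F z‖) '' G)
  · have hF0 : DifferentiableAt ℂ F 0 := hFG.differentiableAt (hG.mem_nhds (hVG zero_mem_calV))
    rw [← fderiv_eq_of_eqOn_of_balanced balanced_calV span_calV hF0 hFV]
    refine norm_fderiv_apply_le_of_balanced hG hbal hFG ?_ (fun z hz => ?_) hx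
    · rw [hFV _ zero_mem_calV, map_zero]
    · rw [← hFS]; exact le_csSup hbdd ⟨z, hz, rfl⟩
  · -- `sSup` of an unbounded set is `0`, so `ℓ` vanishes on `calV`, which spans.
    have hS : S = 0 := by rw [← hFS, Real.sSup_of_not_bddAbove hbdd]
    have hℓ : ℓ = 0 := ContinuousLinearMap.coe_injective <| LinearMap.ext_on span_calV
      fun z hz => by simpa [hS] using hℓS z hz
    simp [hℓ, hS]

theorem stmt_18 (G : Set (ℂ × ℂ × ℂ)) (hG : IsOpen G) (hbal : Balanced ℂ G)
    (hVG : calV ⊆ G)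
    (hnp : ∀ f : ℂ × ℂ × ℂ → ℂ, HoloOnV f → (∃ C : ℝ, ∀ z ∈ calV, ‖f z‖ ≤ C) →
      ∃ F : ℂ × ℂ × ℂ → ℂ, DifferentiableOn ℂ F G ∧ (∀ z ∈ calV, F z = f z) ∧
        sSup ((fun z => ‖F z‖) '' G) = sSup ((fun z => ‖f z‖) '' calV)) :
    G ⊆ calG := by
  intro x hx
  obtain ⟨r, hr, hrx⟩ := exists_one_lt_smul_mem hG hx
  have hhull : (r : ℂ) • x ∈ closure (convexHull ℝ calV) :=
    mem_closure_convexHull_of_forall_norm_le balanced_calV ⟨0, zero_mem_calV⟩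
      fun ℓ => norm_apply_le_sSup_calV hG hbal hVG hnp ℓ hrx
  exact mem_calG_of_smul_mem_calW hr
    (closure_minimal convexHull_calV_subset_calW isClosed_calW hhull)
end
end

section
/- Let x₁, …, x_d be upper triangular n×n complex matrices, let 1 ≤ j ≤ n, and let λ = (λ₁, …, λ_d) ∈ ℂ^d where λ_i is the j-th diagonal entry of x_i. Let δ = (δ_{ab}) be an I×J matrix whose entries are noncommutative polynomials in d variables. Then ‖δ(λ)‖ ≤ ‖δ(x)‖, where δ(λ) is the I×J scalar matrix (δ_{ab}(λ₁,…,λ_d)), δ(x) is the block matrix (δ_{ab}(x₁,…,x_d)) regarded as an operator from ℂ^J ⊗ ℂⁿ to ℂ^I ⊗ ℂⁿ, and ‖·‖ denotes operator norms with respect to Euclidean norms. In particular, if ‖δ(x)‖ < 1 then ‖δ(λ)‖ < 1. -/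
noncomputable section

/-- The `ℓ² → ℓ²` operator norm of a complex matrix. -/
def opNorm {m n : Type*} [Fintype m] [Fintype n] [DecidableEq n] (A : Matrix m n ℂ) : ℝ :=
  ‖LinearMap.toContinuousLinearMap (Matrix.toEuclideanLin A)‖

/-- Evaluation of a noncommutative polynomial in `d` variables (an element of the
free algebra on `d` generators) at a `d`-tuple `y` in a unital `ℂ`-algebra `A`:
the image under the unique unital algebra homomorphism sending the `i`-th generator
to `y i`. -/
def ncEval {d : ℕ} {A : Type*} [Ring A] [Algebra ℂ A] (y : Fin d → A)
    (δ : FreeAlgebra ℂ (Fin d)) : A :=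
  FreeAlgebra.lift ℂ y δ

/-!
Taking the `j`-th diagonal entry is an algebra homomorphism on upper triangular matrices, so it
commutes with evaluating noncommutative polynomials: `δ(λ)` is exactly the compression of `δ(x)`
to the coordinates `ℂ^I ⊗ e_j` and `ℂ^J ⊗ e_j`. Compressing a matrix to a subset of its rows and
columns does not increase its `ℓ²` operator norm.
-/

theorem AlgHom.map_ncEval {d : ℕ} {A B : Type*} [Ring A] [Algebra ℂ A] [Ring B] [Algebra ℂ B]
    (φ : A →ₐ[ℂ] B) (y : Fin d → A) (p : FreeAlgebra ℂ (Fin d)) :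
    φ (ncEval y p) = ncEval (φ ∘ y) p := by
  rw [ncEval, ncEval, ← AlgHom.comp_apply]
  congr 1
  exact FreeAlgebra.hom_ext (by ext; simp)

namespace Matrix

section Triangular

variable {m R : Type*} [Fintype m] [LinearOrder m]

theorem BlockTriangular.mul_apply_self [NonUnitalNonAssocSemiring R] {M N : Matrix m m R}
    (hM : M.BlockTriangular id) (hN : N.BlockTriangular id) (i : m) :
    (M * N) i i = M i i * N i i := by
  rw [mul_apply]
  refine Fintype.sum_eq_single i fun k hk => ?_
  rcases hk.lt_or_gt with h | h
  · rw [hM h, zero_mul]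
  · rw [hN h, mul_zero]

variable [DecidableEq m]

variable (R) in
def diagEntryAlgHom [CommSemiring R] (i : m) :
    blockTriangularSubalgebra R R (id : m → m) →ₐ[R] R where
  toFun M := (M : Matrix m m R) i i
  map_one' := one_apply_eq i
  map_mul' M N := BlockTriangular.mul_apply_self M.2 N.2 i
  map_zero' := rfl
  map_add' _ _ := rfl
  commutes' r := by simp [algebraMap_eq_diagonal]

theorem _root_.ncEval_apply_self_of_blockTriangular {d : ℕ} (x : Fin d → Matrix m m ℂ)
    (hx : ∀ i, (x i).BlockTriangular id) (j : m) (p : FreeAlgebra ℂ (Fin d)) :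
    ncEval x p j j = ncEval (fun i => x i j j) p := by
  let x' : Fin d → blockTriangularSubalgebra ℂ ℂ (id : m → m) := fun i => ⟨x i, hx i⟩
  have hlift : ncEval x p = (blockTriangularSubalgebra ℂ ℂ id).val (ncEval x' p) := by
    rw [AlgHom.map_ncEval]
    rfl
  rw [hlift]
  exact (diagEntryAlgHom ℂ j).map_ncEval x' p

end Triangular

section Compression

open scoped Matrix.Norms.L2Operator

variable {𝕜 m m' n n' : Type*} [RCLike 𝕜] [Fintype m] [Fintype m'] [Fintype n] [Fintype n']

theorem l2_opNorm_submatrix_rows_le [DecidableEq n] (A : Matrix m n 𝕜) {e : m' → m}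
    (he : e.Injective) : ‖A.submatrix e id‖ ≤ ‖A‖ := by
  rw [l2_opNorm_def, l2_opNorm_def]
  refine ContinuousLinearMap.opNorm_le_bound _ (norm_nonneg _) fun v => ?_
  have hrows : ‖toEuclideanLin (A.submatrix e id) v‖ ≤ ‖toEuclideanLin A v‖ := by
    rw [EuclideanSpace.norm_eq, EuclideanSpace.norm_eq]
    gcongr
    calc ∑ i, ‖(toEuclideanLin A v).ofLp (e i)‖ ^ 2
        = ∑ k ∈ Finset.univ.map ⟨e, he⟩, ‖(toEuclideanLin A v).ofLp k‖ ^ 2 := by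
          rw [Finset.sum_map]; rfl
      _ ≤ _ := Finset.sum_le_univ_sum_of_nonneg fun _ => by positivity
  exact hrows.trans (((toEuclideanLin ≪≫ₗ LinearMap.toContinuousLinearMap) A).le_opNorm v)

theorem l2_opNorm_submatrix_le [DecidableEq m] [DecidableEq n] [DecidableEq n']
    (A : Matrix m n 𝕜) {e : m' → m} {f : n' → n} (he : e.Injective) (hf : f.Injective) :
    ‖A.submatrix e f‖ ≤ ‖A‖ := by
  have hcols : ‖A.submatrix id f‖ ≤ ‖A‖ := by
    rw [← l2_opNorm_conjTranspose, conjTranspose_submatrix, ← l2_opNorm_conjTranspose A]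
    exact l2_opNorm_submatrix_rows_le Aᴴ hf
  exact (l2_opNorm_submatrix_rows_le (A.submatrix id f) he).trans hcols

theorem _root_.opNorm_submatrix_le [DecidableEq m] [DecidableEq n] [DecidableEq n']
    (A : Matrix m n ℂ) {e : m' → m} {f : n' → n} (he : e.Injective) (hf : f.Injective) :
    opNorm (A.submatrix e f) ≤ opNorm A :=
  l2_opNorm_submatrix_le A he hf

end Compression

end Matrix

theorem stmt_19 (d n I J : ℕ) (x : Fin d → Matrix (Fin n) (Fin n) ℂ)
    (hx : ∀ i, (x i).BlockTriangular (id : Fin n → Fin n))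
    (j : Fin n) (lam : Fin d → ℂ) (hlam : ∀ i, lam i = x i j j)
    (δ : Matrix (Fin I) (Fin J) (FreeAlgebra ℂ (Fin d))) :
    -- `δ(λ)` is the scalar `I × J` matrix `(δ_{ab}(λ))`, and `δ(x)` is the block matrix
    -- `(δ_{ab}(x))`, regarded as an operator from `ℂ^J ⊗ ℂ^n` to `ℂ^I ⊗ ℂ^n`.
    opNorm (Matrix.of fun a b => ncEval (fun i => (lam i : ℂ)) (δ a b)) ≤
      opNorm (Matrix.of fun (p : Fin I × Fin n) (q : Fin J × Fin n) =>
        ncEval x (δ p.1 q.1) p.2 q.2) ∧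
    (opNorm (Matrix.of fun (p : Fin I × Fin n) (q : Fin J × Fin n) =>
        ncEval x (δ p.1 q.1) p.2 q.2) < 1 →
      opNorm (Matrix.of fun a b => ncEval (fun i => (lam i : ℂ)) (δ a b)) < 1) := by
  set δx := Matrix.of fun (p : Fin I × Fin n) (q : Fin J × Fin n) => ncEval x (δ p.1 q.1) p.2 q.2
  have hcompress : (Matrix.of fun a b => ncEval (fun i => (lam i : ℂ)) (δ a b)) =
      δx.submatrix (·, j) (·, j) := by
    ext a b
    simp only [δx, Matrix.submatrix_apply, Matrix.of_apply, funext hlam,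
      ncEval_apply_self_of_blockTriangular x hx]
  have hle : opNorm (δx.submatrix (·, j) (·, j)) ≤ opNorm δx :=
    opNorm_submatrix_le δx (Prod.mk_left_injective j) (Prod.mk_left_injective j)
  rw [hcompress]
  exact ⟨hle, hle.trans_lt⟩
end
end
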